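/- Let f : ℝ² → ℝ be f(x,y) = x² + y², and for δ > 0 set a = (0,0), b(δ) = (−δ, η(δ)), c(δ) = (δ, η(δ)). Then: (i) if η(δ) = δ, then q_{(f,a,b(δ),c(δ))} → (0,0) as δ → 0⁺ (the tangent plane z = 0); (ii) if η(δ) = δ², then q_{(f,a,b(δ),c(δ))} → (0,1) as δ → 0⁺ (the plane z = y, not the tangent plane); (iii) if η(δ) = δ³, then ‖q_{(f,a,b(δ),c(δ))}‖ → +∞ as δ → 0⁺ (the secant planes converge to the vertical plane y = 0). -/

import Mathlib

open scoped RealInnerProductSpace Topology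

noncomputable section

/-- The Euclidean plane `ℝ²` with the standard inner product. -/
abbrev E2 := EuclideanSpace ℝ (Fin 2)

/-- Signed area `τ` of the (oriented) triangle with vertices `a`, `b`, `c`. -/
def tau (a b c : E2) : ℝ :=
  ((b - a) 0 * (c - a) 1 - (b - a) 1 * (c - a) 0) / 2

/-- The vector `w = (f(b)−f(a))·(c−a) − (f(c)−f(a))·(b−a)`. -/
def wvec (f : E2 → ℝ) (a b c : E2) : E2 :=
  (f b - f a) • (c - a) - (f c - f a) • (b - a)

/-- The difference vector quotient `q_{(f,a,b,c)} = (1/(2τ)) • (w₂, −w₁)`. -/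
def qvec (f : E2 → ℝ) (a b c : E2) : E2 :=
  (1 / (2 * tau a b c)) • (WithLp.toLp 2 ![(wvec f a b c) 1, -((wvec f a b c) 0)] : E2)

end

open Filter

/-- Key computation: for `f(x,y)=x²+y²`, `q = ((δ²+η²)/η) • (0,1)` when `δ,η ≠ 0`. -/
lemma qcomp (f : E2 → ℝ) (hf : ∀ v : E2, f v = (v 0) ^ 2 + (v 1) ^ 2)
    (δ η : ℝ) (hδ : δ ≠ 0) (hη : η ≠ 0) :
    qvec f (WithLp.toLp 2 ![0,0]) (WithLp.toLp 2 ![-δ, η]) (WithLp.toLp 2 ![δ, η]) =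
      ((δ^2+η^2)/η) • (WithLp.toLp 2 ![0,1] : E2) := by
  have hδ' : δ * δ⁻¹ = 1 := mul_inv_cancel₀ hδ
  have hη' : η * η⁻¹ = 1 := mul_inv_cancel₀ hη
  ext i
  fin_cases i <;>
    simp [qvec, wvec, tau, hf, PiLp.smul_apply, PiLp.sub_apply, smul_eq_mul]
  field_simp
  linear_combination

/-- for `f(x,y) = x²+y²`, `a = (0,0)`, `b(δ) = (−δ, η(δ))`,
`c(δ) = (δ, η(δ))`: (i) if `η(δ) = δ` then `q → (0,0)` as `δ → 0⁺` (tangent plane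
`z = 0`); (ii) if `η(δ) = δ²` then `q → (0,1)` (the plane `z = y`, not the tangent
plane); (iii) if `η(δ) = δ³` then `‖q‖ → +∞` (the vertical plane `y = 0`). -/
theorem stmt1 (f : E2 → ℝ) (hf : ∀ v : E2, f v = (v 0) ^ 2 + (v 1) ^ 2)
    (a : E2) (ha : a = WithLp.toLp 2 ![0, 0])
    (b c : ℝ → ℝ → E2)
    (hb : ∀ δ η, b δ η = WithLp.toLp 2 ![-δ, η]) (hc : ∀ δ η, c δ η = WithLp.toLp 2 ![δ, η]) :
    Tendsto (fun δ : ℝ => qvec f a (b δ δ) (c δ δ)) (𝓝[>] 0) (𝓝 (0 : E2)) ∧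
    Tendsto (fun δ : ℝ => qvec f a (b δ (δ ^ 2)) (c δ (δ ^ 2))) (𝓝[>] 0)
      (𝓝 (WithLp.toLp 2 ![0, 1] : E2)) ∧
    Tendsto (fun δ : ℝ => ‖qvec f a (b δ (δ ^ 3)) (c δ (δ ^ 3))‖) (𝓝[>] 0) atTop := by
  have hpos : ∀ᶠ δ : ℝ in 𝓝[>] (0:ℝ), 0 < δ := eventually_mem_nhdsWithin
  refine ⟨?_, ?_, ?_⟩
  · -- η = δ : q = (2δ) • v → 0
    have heq : (fun δ : ℝ => (2 * δ) • (WithLp.toLp 2 ![0,1] : E2)) =ᶠ[𝓝[>] (0:ℝ)]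
        (fun δ : ℝ => qvec f a (b δ δ) (c δ δ)) := by
      filter_upwards [hpos] with δ hδ
      rw [ha, hb, hc, qcomp f hf δ δ hδ.ne' hδ.ne']
      congr 1
      field_simp
      ring
    refine Tendsto.congr' heq ?_
    have h1 : Tendsto (fun δ : ℝ => 2 * δ) (𝓝[>] (0:ℝ)) (𝓝 0) := by
      have h := (Continuous.tendsto (by fun_prop : Continuous fun δ : ℝ => 2 * δ) 0)
      simpa using h.mono_left nhdsWithin_le_nhds
    simpa using h1.smul_const (WithLp.toLp 2 ![0,1] : E2)
  · -- η = δ² : q = (1 + δ²) • v → v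
    have heq : (fun δ : ℝ => (1 + δ ^ 2) • (WithLp.toLp 2 ![0,1] : E2)) =ᶠ[𝓝[>] (0:ℝ)]
        (fun δ : ℝ => qvec f a (b δ (δ^2)) (c δ (δ^2))) := by
      filter_upwards [hpos] with δ hδ
      rw [ha, hb, hc, qcomp f hf δ (δ^2) hδ.ne' (pow_ne_zero 2 hδ.ne')]
      congr 1
      field_simp
    refine Tendsto.congr' heq ?_
    have h1 : Tendsto (fun δ : ℝ => 1 + δ ^ 2) (𝓝[>] (0:ℝ)) (𝓝 1) := by
      have h := (Continuous.tendsto (by fun_prop : Continuous fun δ : ℝ => 1 + δ ^ 2) 0)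
      simpa using h.mono_left nhdsWithin_le_nhds
    simpa using h1.smul_const (WithLp.toLp 2 ![0,1] : E2)
  · -- η = δ³ : ‖q‖ = 1/δ + δ³ ≥ 1/δ → ∞
    have hbound : ∀ᶠ δ : ℝ in 𝓝[>] (0:ℝ),
        δ⁻¹ ≤ ‖qvec f a (b δ (δ^3)) (c δ (δ^3))‖ := by
      filter_upwards [hpos] with δ hδ
      rw [ha, hb, hc, qcomp f hf δ (δ^3) hδ.ne' (pow_ne_zero 3 hδ.ne'),
        norm_smul, EuclideanSpace.norm_eq, Real.norm_eq_abs]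
      simp only [Fin.sum_univ_two, Matrix.cons_val_zero, Matrix.cons_val_one, Matrix.head_cons,
        Real.norm_eq_abs]
      rw [show |(0:ℝ)| ^ 2 + |(1:ℝ)| ^ 2 = 1 by simp, Real.sqrt_one, mul_one]
      have h1 : (δ^2 + (δ^3)^2) / δ^3 = δ⁻¹ + δ^3 := by
        field_simp
      rw [h1, abs_of_pos (by positivity)]
      nlinarith [pow_pos hδ 3]
    exact tendsto_atTop_mono' _ hbound tendsto_inv_nhdsGT_zero
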